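/- arXiv:2505.24749 — 3 statements merged into one kernel-verified Lean document; each statement's English description precedes it below -/
import Mathlib

section
/- Let g ∈ ℝ^{n×m} be a nonzero rank-one matrix, let β ∈ (0,1), let 0 < ρ₂ < ρ₁ ≤ 1 with β < ρ₁, and let C ≥ 0. For each integer s ≥ 1 let G^(s) = ρ₁^s · g + H^(s), where ⟨g, H^(s)⟩_F = 0 and ‖H^(s)‖_F ≤ C·ρ₂^s. Define the momentum M^(t) = Σ_{s=1}^{t} β^{t−s} G^(s) and the relative rank-one approximation error κ_M(t) = ‖M^(t) − P^(t)(1) M^(t)‖_F² / ‖M^(t)‖_F², where P^(t)(1) = u₁^(t) (u₁^(t))ᵀ is the orthogonal projection onto a top left-singular vector of M^(t). Then there exist constants K ≥ 0 and c > 1 (any c with 1 < c < (ρ₁ / max{β, ρ₂})² works) such that κ_M(t) ≤ K·c^{−t} for all t ≥ 1; in particular M^(t) becomes rank-one at a geometric rate. -/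
/-!
Write `g = p qᵀ` with `‖q‖ = 1` and `r = max β ρ₂`. The momentum splits as
`M_t = a_t g + E_t` with `a_t ≥ ρ₁^t`, `⟨g, E_t⟩_F = 0` and `‖E_t‖_F ≤ C t r^t`.
For a unit top left-singular vector `u`, `‖M - u uᵀ M‖_F² = ‖M‖_F² - σ₁²`; testing `M` on `q`
gives `σ₁² ≥ a_t² ‖g‖_F²`, and Pythagoras gives `‖M‖_F² = a_t² ‖g‖_F² + ‖E_t‖_F²`. Hence
`κ_t ≤ ‖E_t‖_F² / (a_t² ‖g‖_F²) ≤ (C / ‖g‖_F)² t² (r / ρ₁)^(2t)`, which is `O(c^(-t))`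
because `c (r / ρ₁)² < 1`.
-/

open Matrix Finset

/-- Frobenius inner product `⟨A,B⟩_F = tr(AᵀB)`. -/
noncomputable def frobInner {n m : ℕ} (A B : Matrix (Fin n) (Fin m) ℝ) : ℝ :=
  (Aᵀ * B).trace

/-- Frobenius norm. -/
noncomputable def frobNorm {n m : ℕ} (A : Matrix (Fin n) (Fin m) ℝ) : ℝ :=
  Real.sqrt (frobInner A A)

/-- Spectral norm (largest singular value): the supremum of `‖Ax‖₂` over unit vectors `x`. -/
noncomputable def specNorm {n m : ℕ} (A : Matrix (Fin n) (Fin m) ℝ) : ℝ :=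
  sSup {r : ℝ | ∃ x : Fin m → ℝ, ∑ j, x j ^ 2 = 1 ∧
    r = Real.sqrt (∑ i, (A.mulVec x) i ^ 2)}

theorem Matrix.exists_eq_vecMulVec_of_rank_eq_one {K : Type*} [Field K] {m n : Type*}
    [Fintype n] {A : Matrix m n K} (hA : A.rank = 1) :
    ∃ (p : m → K) (q : n → K), A = vecMulVec p q := by
  classical
  obtain ⟨v, -, hv⟩ := finrank_eq_one_iff'.mp hA
  have hcol (j : n) : (fun i => A i j) ∈ LinearMap.range A.mulVecLin :=
    ⟨Pi.single j 1, by ext i; simp⟩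
  choose q hq using fun j => hv ⟨fun i => A i j, hcol j⟩
  refine ⟨v, q, ?_⟩
  ext i j
  simpa [vecMulVec_apply, mul_comm] using
    (congrArg (fun w : LinearMap.range A.mulVecLin => (w : m → K) i) (hq j)).symm

theorem Matrix.exists_eq_vecMulVec_normalized_of_rank_eq_one {ι κ : Type*} [Fintype κ]
    {A : Matrix ι κ ℝ} (hA : A.rank = 1) :
    ∃ (p : ι → ℝ) (q : κ → ℝ), A = vecMulVec p q ∧ q ⬝ᵥ q = 1 := by
  obtain ⟨p, q, rfl⟩ := exists_eq_vecMulVec_of_rank_eq_one hA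
  have hq : q ≠ 0 := by
    rintro rfl
    rw [show vecMulVec p (0 : κ → ℝ) = 0 by ext; simp [vecMulVec_apply]] at hA
    exact one_ne_zero (hA.symm.trans rank_zero)
  have hqq : 0 < q ⬝ᵥ q := by simpa using dotProduct_self_star_pos_iff.mpr hq
  set s := Real.sqrt (q ⬝ᵥ q)
  have hs : s ≠ 0 := (Real.sqrt_pos.mpr hqq).ne'
  refine ⟨s • p, s⁻¹ • q, ?_, ?_⟩
  · rw [smul_vecMulVec, vecMulVec_smul, smul_smul, mul_inv_cancel₀ hs, one_smul]
  · rw [smul_dotProduct, dotProduct_smul, smul_smul, smul_eq_mul, ← sq, inv_pow,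
      Real.sq_sqrt hqq.le, inv_mul_cancel₀ hqq.ne']

def frobeniusFlatten {ι κ : Type*} [Fintype ι] [Fintype κ] :
    Matrix ι κ ℝ →ₗ[ℝ] EuclideanSpace ℝ (ι × κ) where
  toFun A := WithLp.toLp 2 (Function.uncurry A)
  map_add' _ _ := rfl
  map_smul' _ _ := rfl

@[simp]
theorem frobeniusFlatten_apply {ι κ : Type*} [Fintype ι] [Fintype κ] (A : Matrix ι κ ℝ)
    (i : ι) (j : κ) : frobeniusFlatten A (i, j) = A i j :=
  rfl

section Frobenius

variable {n m : ℕ}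

theorem frobInner_eq_inner (A B : Matrix (Fin n) (Fin m) ℝ) :
    frobInner A B = inner ℝ (frobeniusFlatten A) (frobeniusFlatten B) := by
  simp only [frobInner, trace, Matrix.diag, mul_apply, transpose_apply, PiLp.inner_apply,
    Fintype.sum_prod_type, frobeniusFlatten_apply, RCLike.inner_apply, conj_trivial]
  rw [sum_comm]
  simp_rw [mul_comm]

theorem frobNorm_eq_norm (A : Matrix (Fin n) (Fin m) ℝ) :
    frobNorm A = ‖frobeniusFlatten A‖ := by
  rw [frobNorm, frobInner_eq_inner, real_inner_self_eq_norm_sq, Real.sqrt_sq (norm_nonneg _)]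

theorem frobNorm_nonneg (A : Matrix (Fin n) (Fin m) ℝ) : 0 ≤ frobNorm A :=
  Real.sqrt_nonneg _

theorem frobNorm_pos {A : Matrix (Fin n) (Fin m) ℝ} (hA : A ≠ 0) : 0 < frobNorm A := by
  rw [frobNorm_eq_norm, norm_pos_iff]
  intro h
  apply hA
  ext i j
  simpa using congrArg (fun v => v (i, j)) h

theorem frobInner_vecMulVec_right (A : Matrix (Fin n) (Fin m) ℝ) (x : Fin n → ℝ)
    (y : Fin m → ℝ) : frobInner A (vecMulVec x y) = x ᵥ* A ⬝ᵥ y := by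
  rw [frobInner, mul_vecMulVec, trace_vecMulVec, mulVec_transpose]

theorem frobNorm_sq (A : Matrix (Fin n) (Fin m) ℝ) : frobNorm A ^ 2 = frobInner A A := by
  rw [frobNorm_eq_norm, frobInner_eq_inner, real_inner_self_eq_norm_sq]

theorem frobInner_comm (A B : Matrix (Fin n) (Fin m) ℝ) : frobInner A B = frobInner B A := by
  rw [frobInner_eq_inner, frobInner_eq_inner, real_inner_comm]

theorem frobNorm_vecMulVec_sq (p : Fin n → ℝ) (q : Fin m → ℝ) :
    frobNorm (vecMulVec p q) ^ 2 = (p ⬝ᵥ p) * (q ⬝ᵥ q) := by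
  rw [frobNorm_sq, frobInner_vecMulVec_right, vecMul_vecMulVec, smul_dotProduct, smul_eq_mul]

theorem frobNorm_sub_vecMulVec_mul_sq (M : Matrix (Fin n) (Fin m) ℝ) {u : Fin n → ℝ}
    (hu : u ⬝ᵥ u = 1) :
    frobNorm (M - vecMulVec u u * M) ^ 2 = frobNorm M ^ 2 - u ᵥ* M ⬝ᵥ u ᵥ* M := by
  have hcross : frobInner M (vecMulVec u u * M) = u ᵥ* M ⬝ᵥ u ᵥ* M := by
    rw [vecMulVec_mul, frobInner_vecMulVec_right]
  have hproj : frobNorm (vecMulVec u u * M) ^ 2 = u ᵥ* M ⬝ᵥ u ᵥ* M := by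
    rw [vecMulVec_mul, frobNorm_vecMulVec_sq, hu, one_mul]
  rw [frobNorm_eq_norm, frobNorm_eq_norm, map_sub, norm_sub_sq_real, ← frobInner_eq_inner,
    hcross, ← frobNorm_eq_norm (vecMulVec u u * M), hproj]
  ring

theorem frobNorm_sub_vecMulVec_mul_sq_of_eigen (M : Matrix (Fin n) (Fin m) ℝ)
    {u : Fin n → ℝ} {μ : ℝ} (hu : u ⬝ᵥ u = 1) (hμ : (M * Mᵀ) *ᵥ u = μ • u) :
    frobNorm (M - vecMulVec u u * M) ^ 2 = frobNorm M ^ 2 - μ := by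
  have hw : u ᵥ* M ⬝ᵥ u ᵥ* M = μ := by
    rw [← dotProduct_mulVec, ← mulVec_transpose, mulVec_mulVec, hμ, dotProduct_smul, hu,
      smul_eq_mul, mul_one]
  rw [frobNorm_sub_vecMulVec_mul_sq M hu, hw]

theorem dotProduct_mulVec_self_le_specNorm_sq (A : Matrix (Fin n) (Fin m) ℝ)
    {x : Fin m → ℝ} (hx : x ⬝ᵥ x = 1) : A *ᵥ x ⬝ᵥ A *ᵥ x ≤ specNorm A ^ 2 := by
  have sum_sq (v : Fin n → ℝ) : ∑ i, v i ^ 2 = v ⬝ᵥ v := by simp only [dotProduct, sq]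
  have hbdd : BddAbove {r : ℝ | ∃ y : Fin m → ℝ, ∑ j, y j ^ 2 = 1 ∧
      r = Real.sqrt (∑ i, (A *ᵥ y) i ^ 2)} := by
    refine ⟨Real.sqrt (∑ i, ∑ j, A i j ^ 2), ?_⟩
    rintro r ⟨y, hy, rfl⟩
    gcongr with i
    calc (A *ᵥ y) i ^ 2 ≤ (∑ j, A i j ^ 2) * ∑ j, y j ^ 2 :=
          sum_mul_sq_le_sq_mul_sq univ (A i) y
      _ = ∑ j, A i j ^ 2 := by rw [hy, mul_one]
  have hle : Real.sqrt (A *ᵥ x ⬝ᵥ A *ᵥ x) ≤ specNorm A :=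
    le_csSup hbdd ⟨x, by simp only [dotProduct, sq] at hx ⊢; exact hx, by rw [sum_sq]⟩
  calc A *ᵥ x ⬝ᵥ A *ᵥ x = Real.sqrt (A *ᵥ x ⬝ᵥ A *ᵥ x) ^ 2 :=
        (Real.sq_sqrt (by rw [← sum_sq]; positivity)).symm
    _ ≤ specNorm A ^ 2 := by gcongr

theorem sq_mul_frobNorm_sq_le_specNorm_sq {p : Fin n → ℝ} {q : Fin m → ℝ} (hq : q ⬝ᵥ q = 1)
    (a : ℝ) {E : Matrix (Fin n) (Fin m) ℝ} (hE : frobInner (vecMulVec p q) E = 0) :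
    a ^ 2 * frobNorm (vecMulVec p q) ^ 2 ≤ specNorm (a • vecMulVec p q + E) ^ 2 := by
  have hMq : (a • vecMulVec p q + E) *ᵥ q = a • p + E *ᵥ q := by
    rw [add_mulVec, smul_mulVec, vecMulVec_mulVec, hq]
    simp
  have hcross : p ⬝ᵥ E *ᵥ q = 0 := by
    rw [dotProduct_mulVec, ← frobInner_vecMulVec_right, frobInner_comm, hE]
  calc a ^ 2 * frobNorm (vecMulVec p q) ^ 2
      ≤ a ^ 2 * (p ⬝ᵥ p) + E *ᵥ q ⬝ᵥ E *ᵥ q := by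
        rw [frobNorm_vecMulVec_sq, hq, mul_one, le_add_iff_nonneg_right]
        exact sum_nonneg fun i _ => mul_self_nonneg _
    _ = (a • vecMulVec p q + E) *ᵥ q ⬝ᵥ (a • vecMulVec p q + E) *ᵥ q := by
        rw [hMq]
        simp only [add_dotProduct, dotProduct_add, smul_dotProduct, dotProduct_smul,
          dotProduct_comm (E *ᵥ q) p, hcross, smul_eq_mul]
        ring
    _ ≤ specNorm (a • vecMulVec p q + E) ^ 2 := dotProduct_mulVec_self_le_specNorm_sq _ hq

theorem frobNorm_add_sq_of_frobInner_eq_zero {A B : Matrix (Fin n) (Fin m) ℝ}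
    (h : frobInner A B = 0) : frobNorm (A + B) ^ 2 = frobNorm A ^ 2 + frobNorm B ^ 2 := by
  rw [frobInner_eq_inner] at h
  simp only [frobNorm_eq_norm, map_add]
  simpa only [sq] using norm_add_sq_eq_norm_sq_add_norm_sq_real h

theorem frobNorm_smul (a : ℝ) (A : Matrix (Fin n) (Fin m) ℝ) :
    frobNorm (a • A) = |a| * frobNorm A := by
  rw [frobNorm_eq_norm, frobNorm_eq_norm, map_smul, norm_smul, Real.norm_eq_abs]

theorem frobInner_smul_left (a : ℝ) (A B : Matrix (Fin n) (Fin m) ℝ) :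
    frobInner (a • A) B = a * frobInner A B := by
  rw [frobInner_eq_inner, frobInner_eq_inner, map_smul, real_inner_smul_left]

theorem frobNorm_sub_vecMulVec_mul_sq_div_le {p : Fin n → ℝ} {q : Fin m → ℝ}
    (hq : q ⬝ᵥ q = 1) (hpq : vecMulVec p q ≠ 0) {a : ℝ} (ha : a ≠ 0)
    {E : Matrix (Fin n) (Fin m) ℝ} (hE : frobInner (vecMulVec p q) E = 0) {u : Fin n → ℝ}
    (hu : u ⬝ᵥ u = 1) {M : Matrix (Fin n) (Fin m) ℝ} (hM : M = a • vecMulVec p q + E)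
    (hu_top : (M * Mᵀ) *ᵥ u = specNorm M ^ 2 • u) :
    frobNorm (M - vecMulVec u u * M) ^ 2 / frobNorm M ^ 2
      ≤ frobNorm E ^ 2 / (a ^ 2 * frobNorm (vecMulVec p q) ^ 2) := by
  have hsignal : 0 < a ^ 2 * frobNorm (vecMulVec p q) ^ 2 := by
    have := frobNorm_pos hpq
    positivity
  have hpyth : frobNorm M ^ 2 = a ^ 2 * frobNorm (vecMulVec p q) ^ 2 + frobNorm E ^ 2 := by
    rw [hM, frobNorm_add_sq_of_frobInner_eq_zero (by rw [frobInner_smul_left, hE, mul_zero]),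
      frobNorm_smul, mul_pow, sq_abs]
  have hspec := sq_mul_frobNorm_sq_le_specNorm_sq hq a hE
  rw [← hM] at hspec
  rw [frobNorm_sub_vecMulVec_mul_sq_of_eigen M hu hu_top]
  apply div_le_div₀ (sq_nonneg _) (by linarith) hsignal
  linarith [sq_nonneg (frobNorm E)]

end Frobenius

def momentum {X : Type*} [AddCommMonoid X] [Module ℝ X] (β : ℝ) (G : ℕ → X) (t : ℕ) :
    X :=
  ∑ s ∈ Icc 1 t, β ^ (t - s) • G s

section Momentum

variable {X : Type*} [AddCommMonoid X] [Module ℝ X] {β : ℝ}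

theorem momentum_eq_smul_add {g : X} {x : ℕ → ℝ} {G H : ℕ → X}
    (hG : ∀ s, 1 ≤ s → G s = x s • g + H s) (t : ℕ) :
    momentum β G t = momentum β x t • g + momentum β H t := by
  rw [momentum, momentum, momentum, sum_smul, ← sum_add_distrib]
  refine sum_congr rfl fun s hs => ?_
  rw [hG s (mem_Icc.mp hs).1, smul_add, smul_assoc]

theorem pow_le_momentum_pow (hβ : 0 ≤ β) {ρ : ℝ} (hρ : 0 ≤ ρ) {t : ℕ} (ht : 1 ≤ t) :
    ρ ^ t ≤ momentum β (ρ ^ ·) t := by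
  simpa [momentum] using single_le_sum (f := fun s => β ^ (t - s) • ρ ^ s)
    (fun s _ => by positivity) (mem_Icc.mpr ⟨ht, le_rfl⟩)

theorem norm_momentum_le {E : Type*} [SeminormedAddCommGroup E] [NormedSpace ℝ E]
    {h : ℕ → E} {ρ r C : ℝ} (hβ : 0 ≤ β) (hβr : β ≤ r) (hρ : 0 ≤ ρ) (hρr : ρ ≤ r)
    (hC : 0 ≤ C) (hh : ∀ s, 1 ≤ s → ‖h s‖ ≤ C * ρ ^ s) (t : ℕ) :
    ‖momentum β h t‖ ≤ C * t * r ^ t := by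
  have hterm : ∀ s ∈ Icc 1 t, ‖β ^ (t - s) • h s‖ ≤ C * r ^ t := by
    intro s hs
    obtain ⟨hs1, hst⟩ := mem_Icc.mp hs
    calc ‖β ^ (t - s) • h s‖ = β ^ (t - s) * ‖h s‖ := by
          rw [norm_smul, Real.norm_eq_abs, abs_of_nonneg (by positivity)]
      _ ≤ r ^ (t - s) * (C * r ^ s) :=
          mul_le_mul (by gcongr) ((hh s hs1).trans (by gcongr)) (norm_nonneg _)
            (pow_nonneg (hβ.trans hβr) _)
      _ = C * r ^ t := by rw [mul_left_comm, ← pow_add, Nat.sub_add_cancel hst]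
  calc ‖momentum β h t‖ ≤ ∑ s ∈ Icc 1 t, C * r ^ t :=
        (norm_sum_le _ _).trans (sum_le_sum hterm)
    _ = C * t * r ^ t := by
        simp only [sum_const, Nat.card_Icc, add_tsub_cancel_right, nsmul_eq_mul]
        ring

variable {n m : ℕ}

theorem frobInner_momentum_eq_zero {A : Matrix (Fin n) (Fin m) ℝ}
    {H : ℕ → Matrix (Fin n) (Fin m) ℝ} (hH : ∀ s, 1 ≤ s → frobInner A (H s) = 0) (t : ℕ) :
    frobInner A (momentum β H t) = 0 := by
  rw [momentum, frobInner_eq_inner, map_sum, inner_sum]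
  refine sum_eq_zero fun s hs => ?_
  rw [map_smul, real_inner_smul_right, ← frobInner_eq_inner, hH s (mem_Icc.mp hs).1,
    mul_zero]

theorem frobNorm_momentum_le {H : ℕ → Matrix (Fin n) (Fin m) ℝ} {ρ r C : ℝ} (hβ : 0 ≤ β)
    (hβr : β ≤ r) (hρ : 0 ≤ ρ) (hρr : ρ ≤ r) (hC : 0 ≤ C)
    (hH : ∀ s, 1 ≤ s → frobNorm (H s) ≤ C * ρ ^ s) (t : ℕ) :
    frobNorm (momentum β H t) ≤ C * t * r ^ t := by
  simp only [momentum, frobNorm_eq_norm, map_sum, map_smul] at hH ⊢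
  exact norm_momentum_le hβ hβr hρ hρr hC hH t

end Momentum

theorem exists_pow_mul_pow_le_div_pow (k : ℕ) {x c : ℝ} (hx : 0 ≤ x) (hc : 0 < c)
    (hcx : c * x < 1) : ∃ K, 0 ≤ K ∧ ∀ t : ℕ, (t : ℝ) ^ k * x ^ t ≤ K / c ^ t := by
  obtain ⟨K, hK⟩ :=
    (tendsto_pow_const_mul_const_pow_of_lt_one k (by positivity) hcx).bddAbove_range
  refine ⟨max K 0, le_max_right _ _, fun t => ?_⟩
  rw [le_div_iff₀ (by positivity), mul_assoc, ← mul_pow, mul_comm x]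
  exact (hK ⟨t, rfl⟩).trans (le_max_left _ _)

theorem exists_sq_mul_pow_div_le_div_pow (C : ℝ) {D r ρ c : ℝ} (hD : 0 < D) (hr : 0 < r)
    (hρ : 0 < ρ) (hc : 0 < c) (hcr : c < (ρ / r) ^ 2) :
    ∃ K, 0 ≤ K ∧ ∀ t : ℕ, (C * t * r ^ t) ^ 2 / ((ρ ^ t) ^ 2 * D) ≤ K / c ^ t := by
  have hcx : c * (r / ρ) ^ 2 < 1 := by
    rw [div_pow, lt_div_iff₀ (by positivity)] at hcr
    rw [div_pow, mul_div_assoc', div_lt_one (by positivity)]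
    linarith
  obtain ⟨K, hK0, hK⟩ := exists_pow_mul_pow_le_div_pow 2 (by positivity) hc hcx
  refine ⟨C ^ 2 / D * K, by positivity, fun t => ?_⟩
  calc (C * t * r ^ t) ^ 2 / ((ρ ^ t) ^ 2 * D)
        = C ^ 2 / D * ((t : ℝ) ^ 2 * ((r / ρ) ^ 2) ^ t) := by
        rw [pow_right_comm (r / ρ) 2 t, div_pow]
        field_simp
    _ ≤ C ^ 2 / D * (K / c ^ t) := by gcongr; exact hK t
    _ = C ^ 2 / D * K / c ^ t := by rw [mul_div_assoc]

theorem moment_becomes_low_rank_general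
    {n m : ℕ} (g : Matrix (Fin n) (Fin m) ℝ) (hg : g.rank = 1)
    (β ρ₁ ρ₂ C : ℝ) (hβ0 : 0 < β)
    (hρ₂0 : 0 < ρ₂) (hβρ : β < ρ₁) (hC : 0 ≤ C)
    (H G M : ℕ → Matrix (Fin n) (Fin m) ℝ)
    (hHorth : ∀ s, 1 ≤ s → frobInner g (H s) = 0)
    (hHnorm : ∀ s, 1 ≤ s → frobNorm (H s) ≤ C * ρ₂ ^ s)
    (hG : ∀ s, 1 ≤ s → G s = ρ₁ ^ s • g + H s)
    (hM : ∀ t, M t = ∑ s ∈ Finset.Icc 1 t, β ^ (t - s) • G s)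
    (u : ℕ → Fin n → ℝ)
    (hu_unit : ∀ t, 1 ≤ t → ∑ i, u t i ^ 2 = 1)
    (hu_top : ∀ t, 1 ≤ t →
      (M t * (M t)ᵀ).mulVec (u t) = (specNorm (M t)) ^ 2 • u t)
    (κ : ℕ → ℝ)
    (hκ : ∀ t, κ t =
      frobNorm (M t - vecMulVec (u t) (u t) * M t) ^ 2 / frobNorm (M t) ^ 2) :
    ∀ c : ℝ, 1 < c → c < (ρ₁ / max β ρ₂) ^ 2 →
      ∃ K : ℝ, 0 ≤ K ∧ ∀ t, 1 ≤ t → κ t ≤ K / c ^ t := by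
  intro c hc1 hc2
  have hg0 : g ≠ 0 := by
    rintro rfl
    exact one_ne_zero (hg.symm.trans rank_zero)
  obtain ⟨p, q, rfl, hq⟩ := exists_eq_vecMulVec_normalized_of_rank_eq_one hg
  have hρ₁ : 0 < ρ₁ := hβ0.trans hβρ
  have hr : 0 < max β ρ₂ := hβ0.trans_le (le_max_left _ _)
  have hg2 := pow_pos (frobNorm_pos hg0) 2
  obtain ⟨K, hK0, hK⟩ := exists_sq_mul_pow_div_le_div_pow C hg2 hr hρ₁ (by linarith) hc2
  refine ⟨K, hK0, fun t ht => ?_⟩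
  have ha := pow_le_momentum_pow hβ0.le hρ₁.le ht
  calc κ t ≤ frobNorm (momentum β H t) ^ 2
        / (momentum β (ρ₁ ^ ·) t ^ 2 * frobNorm (vecMulVec p q) ^ 2) := by
        rw [hκ t]
        exact frobNorm_sub_vecMulVec_mul_sq_div_le hq hg0 ((pow_pos hρ₁ t).trans_le ha).ne'
          (frobInner_momentum_eq_zero hHorth t) (by simpa [dotProduct, sq] using hu_unit t ht)
          ((hM t).trans (momentum_eq_smul_add hG t)) (hu_top t ht)
    _ ≤ (C * t * max β ρ₂ ^ t) ^ 2 / ((ρ₁ ^ t) ^ 2 * frobNorm (vecMulVec p q) ^ 2) := by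
        gcongr
        · exact frobNorm_nonneg _
        · exact frobNorm_momentum_le hβ0.le (le_max_left _ _) hρ₂0.le (le_max_right _ _) hC
            hHnorm t
    _ ≤ K / c ^ t := hK t

/-- **Moment becomes low-rank during training.**
If `G^(s) = ρ₁^s g + H^(s)` with `g` rank one, `H^(s) ⟂ g` and `‖H^(s)‖_F ≤ C ρ₂^s`
(`0 < ρ₂ < ρ₁ ≤ 1`, `β < ρ₁`), then the relative rank-one approximation error of the
momentum `M^(t) = Σ_{s=1}^t β^{t-s} G^(s)` decays geometrically: for any
`1 < c < (ρ₁ / max{β,ρ₂})²` there is `K ≥ 0` with `κ_M(t) ≤ K c^{-t}` for all `t ≥ 1`. -/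
theorem moment_becomes_low_rank
    {n m : ℕ} (g : Matrix (Fin n) (Fin m) ℝ) (hg : g.rank = 1)
    (β ρ₁ ρ₂ C : ℝ) (hβ0 : 0 < β) (hβ1 : β < 1)
    (hρ₂0 : 0 < ρ₂) (hρ₂₁ : ρ₂ < ρ₁) (hρ₁ : ρ₁ ≤ 1) (hβρ : β < ρ₁) (hC : 0 ≤ C)
    (H G M : ℕ → Matrix (Fin n) (Fin m) ℝ)
    (hHorth : ∀ s, 1 ≤ s → frobInner g (H s) = 0)
    (hHnorm : ∀ s, 1 ≤ s → frobNorm (H s) ≤ C * ρ₂ ^ s)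
    (hG : ∀ s, 1 ≤ s → G s = ρ₁ ^ s • g + H s)
    (hM : ∀ t, M t = ∑ s ∈ Finset.Icc 1 t, β ^ (t - s) • G s)
    (u : ℕ → Fin n → ℝ)
    (hu_unit : ∀ t, 1 ≤ t → ∑ i, u t i ^ 2 = 1)
    (hu_top : ∀ t, 1 ≤ t →
      (M t * (M t)ᵀ).mulVec (u t) = (specNorm (M t)) ^ 2 • u t)
    (κ : ℕ → ℝ)
    (hκ : ∀ t, κ t =
      frobNorm (M t - vecMulVec (u t) (u t) * M t) ^ 2 / frobNorm (M t) ^ 2) :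
    ∀ c : ℝ, 1 < c → c < (ρ₁ / max β ρ₂) ^ 2 →
      ∃ K : ℝ, 0 ≤ K ∧ ∀ t, 1 ≤ t → κ t ≤ K / c ^ t :=
  moment_becomes_low_rank_general g hg β ρ₁ ρ₂ C hβ0 hρ₂0 hβρ hC H G M hHorth hHnorm hG hM u hu_unit
    hu_top κ hκ
end

section
/- Let A ∈ ℝ^{m×n} with m ≤ n, let B = AAᵀ have eigenvalues σ₁ ≥ … ≥ σ_m with σ₁ > 0 and σ_m > 0, and let κ = σ₁/σ_m be the condition number of B. Set X₀ = B/σ₁, and let (X_i)_{i≥0} be a sequence of m×m matrices satisfying the quadratic-convergence property of the Newton–Schulz iteration toward the orthogonal polar factor of B (which equals I), namely ‖X_i − I‖₂ ≤ ‖X₀ − I‖₂^{2^i} for all i ≥ 0. Then the orthogonalization error E_i = X_i − I after i iterations satisfies ‖E_i‖_F ≤ √m · (1 − 1/κ)^{2^i}. -/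
open Matrix Finset

/-! `specNorm` is Mathlib's ℓ² operator norm. The spectral theorem bounds the operator norm of a
symmetric matrix by its largest absolute eigenvalue, and the eigenvalues of `B/σ₁ - I` lie in
`[σₘ/σ₁ - 1, 0]`, so `‖X₀ - I‖₂ ≤ 1 - 1/κ`. Quadratic convergence raises this to the power `2^i`,
and `‖E‖_F ≤ √m ‖E‖₂` since every column of `E` has Euclidean norm at most `‖E‖₂`. -/

open scoped Matrix.Norms.L2Operator

lemma EuclideanSpace.norm_toLp_eq_sqrt_sum_sq {ι : Type*} [Fintype ι] (x : ι → ℝ) :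
    ‖WithLp.toLp 2 x‖ = √(∑ i, x i ^ 2) := by
  simp [EuclideanSpace.norm_eq]

theorem specNorm_eq_l2_opNorm {p q : ℕ} (E : Matrix (Fin p) (Fin q) ℝ) : specNorm E = ‖E‖ := by
  rw [Matrix.l2_opNorm_def, ← ContinuousLinearMap.sSup_sphere_eq_norm, specNorm]
  congr 1
  ext r
  simp only [Set.mem_ofPred_eq, Set.mem_image, mem_sphere_zero_iff_norm]
  constructor
  · rintro ⟨x, hx, rfl⟩
    refine ⟨WithLp.toLp 2 x, ?_, ?_⟩
    · rw [EuclideanSpace.norm_toLp_eq_sqrt_sum_sq, hx, Real.sqrt_one]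
    · simp [EuclideanSpace.norm_toLp_eq_sqrt_sum_sq]
  · rintro ⟨x, hx, rfl⟩
    refine ⟨WithLp.ofLp x, ?_, ?_⟩
    · simpa [EuclideanSpace.norm_eq] using hx
    · simp [EuclideanSpace.norm_eq]

lemma Matrix.sum_sq_col_le_l2_opNorm_sq {p q : ℕ} (E : Matrix (Fin p) (Fin q) ℝ) (j : Fin q) :
    ∑ i, E i j ^ 2 ≤ ‖E‖ ^ 2 := by
  have hcol := E.l2_opNorm_mulVec (PiLp.single 2 j (1 : ℝ))
  simp only [PiLp.ofLp_single, Matrix.mulVec_single_one, PiLp.norm_single, norm_one,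
    mul_one] at hcol
  rw [EuclideanSpace.norm_toLp_eq_sqrt_sum_sq] at hcol
  exact (Real.sqrt_le_iff.1 hcol).2

lemma frobNorm_le_sqrt_mul_l2_opNorm {p q : ℕ} (E : Matrix (Fin p) (Fin q) ℝ) :
    frobNorm E ≤ √q * ‖E‖ := by
  calc frobNorm E = √(∑ j, ∑ i, E i j ^ 2) := by
        simp [frobNorm, frobInner, Matrix.trace, Matrix.mul_apply, sq]
    _ ≤ √(∑ _j : Fin q, ‖E‖ ^ 2) :=
        Real.sqrt_le_sqrt (Finset.sum_le_sum fun j _ => E.sum_sq_col_le_l2_opNorm_sq j)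
    _ = √q * ‖E‖ := by simp [Real.sqrt_mul, Real.sqrt_sq (norm_nonneg E)]

lemma Matrix.IsHermitian.l2_opNorm_eq_norm_eigenvalues {𝕜 : Type*} [RCLike 𝕜] {n : Type*}
    [Fintype n] [DecidableEq n] {A : Matrix n n 𝕜} (hA : A.IsHermitian) :
    ‖A‖ = ‖hA.eigenvalues‖ := by
  conv_lhs => rw [hA.spectral_theorem]
  simp only [Unitary.conjStarAlgAut_apply, ← Unitary.coe_star,
    CStarRing.norm_mul_coe_unitary, CStarRing.norm_coe_unitary_mul, Matrix.l2_opNorm_diagonal]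
  exact ((algebraMap_isometry ℝ 𝕜).postcomp_pi).norm_map_of_map_zero (by simp) _

lemma Matrix.IsHermitian.l2_opNorm_le_of_abs_eigenvalue_le {n : Type*} [Fintype n] [DecidableEq n]
    {A : Matrix n n ℝ} (hA : A.IsHermitian) {c : ℝ} (hc : 0 ≤ c)
    (h : ∀ (lam : ℝ) (v : n → ℝ), v ≠ 0 → A *ᵥ v = lam • v → |lam| ≤ c) : ‖A‖ ≤ c := by
  rw [hA.l2_opNorm_eq_norm_eigenvalues]
  refine (pi_norm_le_iff_of_nonneg hc).2 fun i => ?_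
  refine (Real.norm_eq_abs _).trans_le (h _ _ ?_ (hA.mulVec_eigenvectorBasis i))
  simpa using (hA.eigenvectorBasis.orthonormal.ne_zero i)

lemma Matrix.IsHermitian.l2_opNorm_inv_smul_sub_one_le {n : Type*} [Fintype n] [DecidableEq n]
    {B : Matrix n n ℝ} (hB : B.IsHermitian) {σ₁ σₘ : ℝ} (hσ₁ : 0 < σ₁) (hσ : σₘ ≤ σ₁)
    (hmax : ∀ (lam : ℝ) (v : n → ℝ), v ≠ 0 → B *ᵥ v = lam • v → lam ≤ σ₁)
    (hmin : ∀ (lam : ℝ) (v : n → ℝ), v ≠ 0 → B *ᵥ v = lam • v → σₘ ≤ lam) :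
    ‖σ₁⁻¹ • B - 1‖ ≤ 1 - σₘ / σ₁ := by
  have hc : 0 ≤ 1 - σₘ / σ₁ := sub_nonneg.2 ((div_le_one hσ₁).2 hσ)
  have hB' : (σ₁⁻¹ • B - 1).IsHermitian := (hB.smul (.all σ₁⁻¹)).sub Matrix.isHermitian_one
  refine hB'.l2_opNorm_le_of_abs_eigenvalue_le hc fun μ v hv hμ => ?_
  have hBv : B *ᵥ v = (σ₁ * (μ + 1)) • v := by
    rw [Matrix.sub_mulVec, Matrix.smul_mulVec, Matrix.one_mulVec, sub_eq_iff_eq_add] at hμ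
    rw [mul_smul, add_smul, one_smul, ← hμ, smul_inv_smul₀ hσ₁.ne']
  have hμ_nonpos : μ ≤ 0 := by nlinarith [hmax _ v hv hBv]
  have hμ_ge : σₘ / σ₁ ≤ μ + 1 := (div_le_iff₀ hσ₁).2 (by linarith [hmin _ v hv hBv])
  rw [abs_le]
  constructor <;> linarith

theorem newton_schulz_error_bound_general
    {m n : ℕ} (A : Matrix (Fin m) (Fin n) ℝ)
    (σ₁ σₘ κ : ℝ)
    (hσ₁_max : ∀ (lam : ℝ) (v : Fin m → ℝ), v ≠ 0 → (A * Aᵀ).mulVec v = lam • v → lam ≤ σ₁)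
    (hσₘ_eig : ∃ v : Fin m → ℝ, v ≠ 0 ∧ (A * Aᵀ).mulVec v = σₘ • v)
    (hσₘ_min : ∀ (lam : ℝ) (v : Fin m → ℝ), v ≠ 0 → (A * Aᵀ).mulVec v = lam • v → σₘ ≤ lam)
    (hσ₁_pos : 0 < σ₁) (hκ : κ = σ₁ / σₘ)
    (X : ℕ → Matrix (Fin m) (Fin m) ℝ)
    (hX0 : X 0 = σ₁⁻¹ • (A * Aᵀ))
    (hquad : ∀ i : ℕ, specNorm (X i - 1) ≤ specNorm (X 0 - 1) ^ (2 ^ i)) :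
    ∀ i : ℕ, frobNorm (X i - 1) ≤ Real.sqrt m * (1 - 1 / κ) ^ (2 ^ i) := by
  obtain ⟨w, hw, hσₘ_eigvec⟩ := hσₘ_eig
  have hB : (A * Aᵀ).IsHermitian := by simpa using A.isHermitian_mul_conjTranspose_self
  have hX0_err : ‖X 0 - 1‖ ≤ 1 - 1 / κ := by
    rw [hX0, hκ, one_div_div]
    exact hB.l2_opNorm_inv_smul_sub_one_le hσ₁_pos (hσ₁_max σₘ w hw hσₘ_eigvec) hσ₁_max hσₘ_min
  intro i
  calc frobNorm (X i - 1) ≤ √m * ‖X i - 1‖ := frobNorm_le_sqrt_mul_l2_opNorm _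
    _ ≤ √m * ‖X 0 - 1‖ ^ 2 ^ i := by
        gcongr
        simpa only [specNorm_eq_l2_opNorm] using hquad i
    _ ≤ √m * (1 - 1 / κ) ^ 2 ^ i := by gcongr

/-- **Newton–Schulz orthogonalization error bound.**
For `A ∈ ℝ^{m×n}` (`m ≤ n`), `B = AAᵀ` with largest eigenvalue `σ₁ > 0`, smallest
eigenvalue `σₘ > 0` and condition number `κ = σ₁/σₘ`, if `X₀ = B/σ₁` and the iterates
satisfy the quadratic-convergence property `‖Xᵢ − I‖₂ ≤ ‖X₀ − I‖₂^{2^i}` toward the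
orthogonal polar factor `I` of `B`, then the error `Eᵢ = Xᵢ − I` satisfies
`‖Eᵢ‖_F ≤ √m (1 − 1/κ)^{2^i}`. -/
theorem newton_schulz_error_bound
    {m n : ℕ} (hmn : m ≤ n) (A : Matrix (Fin m) (Fin n) ℝ)
    (σ₁ σₘ κ : ℝ)
    (hσ₁_eig : ∃ v : Fin m → ℝ, v ≠ 0 ∧ (A * Aᵀ).mulVec v = σ₁ • v)
    (hσ₁_max : ∀ (lam : ℝ) (v : Fin m → ℝ), v ≠ 0 → (A * Aᵀ).mulVec v = lam • v → lam ≤ σ₁)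
    (hσₘ_eig : ∃ v : Fin m → ℝ, v ≠ 0 ∧ (A * Aᵀ).mulVec v = σₘ • v)
    (hσₘ_min : ∀ (lam : ℝ) (v : Fin m → ℝ), v ≠ 0 → (A * Aᵀ).mulVec v = lam • v → σₘ ≤ lam)
    (hσ₁_pos : 0 < σ₁) (hσₘ_pos : 0 < σₘ) (hκ : κ = σ₁ / σₘ)
    (X : ℕ → Matrix (Fin m) (Fin m) ℝ)
    (hX0 : X 0 = σ₁⁻¹ • (A * Aᵀ))
    (hquad : ∀ i : ℕ, specNorm (X i - 1) ≤ specNorm (X 0 - 1) ^ (2 ^ i)) :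
    ∀ i : ℕ, frobNorm (X i - 1) ≤ Real.sqrt m * (1 - 1 / κ) ^ (2 ^ i) :=
  newton_schulz_error_bound_general A σ₁ σₘ κ hσ₁_max hσₘ_eig hσₘ_min hσ₁_pos hκ X hX0 hquad
end

section
/- Let f : ℝ^{m×n} → ℝ (m ≤ n) be differentiable with L-Lipschitz gradient and bounded below by f*. For t = 1, …, T suppose M^(t) ∈ ℝ^{m×n} has SVD M^(t) = U^(t)S^(t)V^(t)ᵀ, O^(t) = U^(t)V^(t)ᵀ + E^(t) with ‖E^(t)‖_F ≤ δ√m, W^(t+1) = W^(t) − η O^(t) with constant step size η > 0, and the alignment inequality −⟨∇f(W^(t)), U^(t)V^(t)ᵀ⟩_F ≤ −¼‖∇f(W^(t))‖_F + (5/2)‖∇f(W^(t)) − M^(t)‖_F holds at each step. Then ((η − 4η√m·δ)/4) · Σ_{t=1}^{T} ‖∇f(W^(t))‖_F ≤ f(W^(1)) − f* + (5η/2) Σ_{t=1}^{T} ‖∇f(W^(t)) − M^(t)‖_F + η²mLT/2 + Tη²mLδ + Tη²Lmδ²/2. -/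
/-! With `frobInner` as inner product, the matrices form a real inner product space, so the
argument runs there. The descent lemma `f (x + v) ≤ f x + ⟪∇f x, v⟫ + L/2 ‖v‖²` for
`v = -η (P + E)`, together with the alignment bound on `⟪∇f, P⟫`, Cauchy–Schwarz on `⟪∇f, E⟫` and
`‖P + E‖ ≤ (1 + δ)√m`, bounds `‖∇f (W t)‖` by `f (W t) - f (W (t+1))` plus error terms. Summing over
`t` telescopes, and `f ≥ f*` closes the estimate. -/

open Matrix Finset

theorem hasDerivAt_apply_add_smul {E : Type*} [AddCommGroup E] [Module ℝ E] {f D : E → ℝ} {v : E}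
    (hD : ∀ y, HasDerivAt (fun s : ℝ => f (y + s • v)) (D y) 0) (x : E) (s : ℝ) :
    HasDerivAt (fun s : ℝ => f (x + s • v)) (D (x + s • v)) s := by
  have h0 : HasDerivAt (fun τ : ℝ => f (x + s • v + τ • v)) (D (x + s • v)) (s - s) := by
    rw [sub_self]; exact hD _
  have hline : (fun u : ℝ => f (x + u • v)) = fun u => f (x + s • v + (u - s) • v) := by
    funext u
    rw [add_assoc, ← add_smul, add_sub_cancel]
  rw [hline]
  exact h0.comp_sub_const s s

section InnerProductSpace

open scoped RealInnerProductSpace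

variable {E : Type*} [NormedAddCommGroup E] [InnerProductSpace ℝ E]

theorem apply_add_le_of_lipschitz_gradient {f : E → ℝ} {g : E → E} {L : ℝ}
    (hgrad : ∀ x v, HasDerivAt (fun s : ℝ => f (x + s • v)) ⟪g x, v⟫ 0)
    (hlip : ∀ x y, ‖g x - g y‖ ≤ L * ‖x - y‖) (x v : E) :
    f (x + v) ≤ f x + ⟪g x, v⟫ + L / 2 * ‖v‖ ^ 2 := by
  set φ : ℝ → ℝ := fun s => f (x + s • v) - s * ⟪g x, v⟫ - s ^ 2 * (L / 2 * ‖v‖ ^ 2)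
  have hφ (s : ℝ) : HasDerivAt φ (⟪g (x + s • v) - g x, v⟫ - s * (L * ‖v‖ ^ 2)) s := by
    have h := ((hasDerivAt_apply_add_smul (fun y => hgrad y v) x s).sub
      ((hasDerivAt_id s).mul_const ⟪g x, v⟫)).sub ((hasDerivAt_pow 2 s).mul_const (L / 2 * ‖v‖ ^ 2))
    refine h.congr_deriv ?_
    rw [inner_sub_left]
    simp only [Nat.cast_ofNat]
    ring
  have hφ_nonpos : ∀ s ∈ interior (Set.Icc (0 : ℝ) 1),
      ⟪g (x + s • v) - g x, v⟫ - s * (L * ‖v‖ ^ 2) ≤ 0 := by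
    intro s hs
    rw [interior_Icc] at hs
    rw [sub_nonpos]
    calc ⟪g (x + s • v) - g x, v⟫ ≤ ‖g (x + s • v) - g x‖ * ‖v‖ := real_inner_le_norm _ _
      _ ≤ L * ‖s • v‖ * ‖v‖ := by
        gcongr
        simpa using hlip (x + s • v) x
      _ = s * (L * ‖v‖ ^ 2) := by
        rw [norm_smul, Real.norm_of_nonneg hs.1.le]
        ring
  have hanti : AntitoneOn φ (Set.Icc 0 1) :=
    antitoneOn_of_hasDerivWithinAt_nonpos (convex_Icc 0 1)
      (fun s _ => (hφ s).continuousAt.continuousWithinAt)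
      (fun s _ => (hφ s).hasDerivWithinAt) hφ_nonpos
  have h01 := hanti (Set.left_mem_Icc.2 zero_le_one) (Set.right_mem_Icc.2 zero_le_one) zero_le_one
  simp only [φ, one_smul, zero_smul, add_zero, one_pow, one_mul, zero_mul, zero_pow two_ne_zero,
    sub_zero] at h01
  linarith

theorem descent_step_of_inexact_direction {f : E → ℝ} {g : E → E} {L : ℝ} (hL : 0 ≤ L)
    (hgrad : ∀ x v, HasDerivAt (fun s : ℝ => f (x + s • v)) ⟪g x, v⟫ 0)
    (hlip : ∀ x y, ‖g x - g y‖ ≤ L * ‖x - y‖) {x p e : E} {r δ η a : ℝ} (hη : 0 ≤ η)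
    (hp : ‖p‖ ≤ r) (he : ‖e‖ ≤ δ * r) (halign : -⟪g x, p⟫ ≤ -(1 / 4) * ‖g x‖ + a) :
    (η - 4 * η * r * δ) / 4 * ‖g x‖ ≤
      f x - f (x - η • (p + e)) + (η * a + L / 2 * (η * (r + δ * r)) ^ 2) := by
  have hdesc := apply_add_le_of_lipschitz_gradient hgrad hlip x (-(η • (p + e)))
  rw [← sub_eq_add_neg] at hdesc
  have herr : -⟪g x, e⟫ ≤ δ * r * ‖g x‖ := by
    calc -⟪g x, e⟫ ≤ ‖g x‖ * ‖e‖ := by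
          rw [← inner_neg_right, ← norm_neg e]; exact real_inner_le_norm _ _
      _ ≤ δ * r * ‖g x‖ := by rw [mul_comm]; gcongr
  have hinner : ⟪g x, -(η • (p + e))⟫ = η * -⟪g x, p⟫ + η * -⟪g x, e⟫ := by
    rw [inner_neg_right, inner_smul_right, inner_add_right]; ring
  have hnorm : ‖-(η • (p + e))‖ ≤ η * (r + δ * r) := by
    rw [norm_neg, norm_smul, Real.norm_of_nonneg hη]
    gcongr
    exact (norm_add_le p e).trans (add_le_add hp he)
  have hsq : L / 2 * ‖-(η • (p + e))‖ ^ 2 ≤ L / 2 * (η * (r + δ * r)) ^ 2 := by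
    gcongr
  nlinarith [mul_le_mul_of_nonneg_left halign hη, mul_le_mul_of_nonneg_left herr hη]

end InnerProductSpace

theorem Finset.sum_Icc_le_sub_add_sum_of_le_sub_succ_add {T : ℕ} (hT : 1 ≤ T) {a b F : ℕ → ℝ}
    {c : ℝ} (hstep : ∀ t ∈ Icc 1 T, a t ≤ F t - F (t + 1) + b t) (hc : c ≤ F (T + 1)) :
    ∑ t ∈ Icc 1 T, a t ≤ F 1 - c + ∑ t ∈ Icc 1 T, b t := by
  calc ∑ t ∈ Icc 1 T, a t ≤ ∑ t ∈ Icc 1 T, (F t - F (t + 1) + b t) := sum_le_sum hstep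
    _ = F 1 - F (T + 1) + ∑ t ∈ Icc 1 T, b t := by
      rw [sum_add_distrib, ← neg_sub (F (T + 1)), ← sum_Icc_sub hT F, ← sum_neg_distrib]
      simp only [neg_sub]
    _ ≤ F 1 - c + ∑ t ∈ Icc 1 T, b t := by linarith

namespace Matrix

variable {m n : ℕ}

/- Not instances: `Matrix` already carries the product topology, and the norm built from the
Frobenius inner product would give a second, non-defeq one. -/
@[reducible]
noncomputable def frobInnerProductCore : InnerProductSpace.Core ℝ (Matrix (Fin m) (Fin n) ℝ) where
  inner := frobInner
  conj_inner_symm A B := by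
    simp only [frobInner, conj_trivial, ← trace_transpose (Bᵀ * A), transpose_mul,
      transpose_transpose]
  re_inner_nonneg A := by
    simpa [frobInner, conjTranspose_eq_transpose_of_trivial] using
      (posSemidef_conjTranspose_mul_self A).trace_nonneg
  add_left A B C := by simp [frobInner, Matrix.add_mul]
  smul_left A B r := by simp [frobInner]
  definite A h := by
    simpa [conjTranspose_eq_transpose_of_trivial] using
      trace_conjTranspose_mul_self_eq_zero_iff.1 h

@[reducible]
noncomputable def frobNormedAddCommGroup : NormedAddCommGroup (Matrix (Fin m) (Fin n) ℝ) :=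
  frobInnerProductCore.toNormedAddCommGroup

@[reducible]
noncomputable def frobInnerProductSpace :
    @InnerProductSpace ℝ (Matrix (Fin m) (Fin n) ℝ) _
      frobNormedAddCommGroup.toSeminormedAddCommGroup :=
  InnerProductSpace.ofCore frobInnerProductCore.toCore

theorem frobNorm_eq_sqrt_of_mul_transpose_eq_one {P : Matrix (Fin m) (Fin n) ℝ}
    (hP : P * Pᵀ = 1) : frobNorm P = Real.sqrt m := by
  rw [frobNorm, frobInner, trace_mul_comm, hP, trace_one, Fintype.card_fin]

end Matrix

theorem summed_descent_newton_schulz_error_general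
    {m n : ℕ}
    (f : Matrix (Fin m) (Fin n) ℝ → ℝ)
    (gradf : Matrix (Fin m) (Fin n) ℝ → Matrix (Fin m) (Fin n) ℝ)
    (hgrad : ∀ W V : Matrix (Fin m) (Fin n) ℝ,
      HasDerivAt (fun s : ℝ => f (W + s • V)) (frobInner (gradf W) V) 0)
    (L : ℝ) (hL : 0 ≤ L)
    (hlip : ∀ X Y : Matrix (Fin m) (Fin n) ℝ,
      frobNorm (gradf X - gradf Y) ≤ L * frobNorm (X - Y))
    (fstar : ℝ) (hfstar : ∀ X, fstar ≤ f X)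
    (T : ℕ) (hT : 1 ≤ T)
    (W M P E O : ℕ → Matrix (Fin m) (Fin n) ℝ)
    (δ : ℝ)
    (hP : ∀ t ∈ Finset.Icc 1 T, P t * (P t)ᵀ = 1)
    (hO : ∀ t ∈ Finset.Icc 1 T, O t = P t + E t)
    (hE : ∀ t ∈ Finset.Icc 1 T, frobNorm (E t) ≤ δ * Real.sqrt m)
    (η : ℝ) (hη : 0 < η)
    (hupdate : ∀ t ∈ Finset.Icc 1 T, W (t + 1) = W t - η • O t)
    (halign : ∀ t ∈ Finset.Icc 1 T,
      -(frobInner (gradf (W t)) (P t)) ≤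
        -(1 / 4) * frobNorm (gradf (W t)) + (5 / 2) * frobNorm (gradf (W t) - M t)) :
    (η - 4 * η * Real.sqrt m * δ) / 4 * ∑ t ∈ Finset.Icc 1 T, frobNorm (gradf (W t)) ≤
      f (W 1) - fstar
      + (5 * η / 2) * ∑ t ∈ Finset.Icc 1 T, frobNorm (gradf (W t) - M t)
      + η ^ 2 * m * L * T / 2 + T * η ^ 2 * m * L * δ + T * η ^ 2 * L * m * δ ^ 2 / 2 := by
  let := Matrix.frobNormedAddCommGroup (m := m) (n := n)
  let := Matrix.frobInnerProductSpace (m := m) (n := n)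
  set C := L / 2 * (η * (Real.sqrt m + δ * Real.sqrt m)) ^ 2
  have hstep : ∀ t ∈ Icc 1 T, (η - 4 * η * Real.sqrt m * δ) / 4 * frobNorm (gradf (W t)) ≤
      f (W t) - f (W (t + 1)) + (η * (5 / 2 * frobNorm (gradf (W t) - M t)) + C) := by
    intro t ht
    rw [hupdate t ht, hO t ht]
    exact descent_step_of_inexact_direction hL hgrad hlip hη.le
      (Matrix.frobNorm_eq_sqrt_of_mul_transpose_eq_one (hP t ht)).le (hE t ht) (halign t ht)
  have hsum := sum_Icc_le_sub_add_sum_of_le_sub_succ_add hT hstep (hfstar (W (T + 1)))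
  have hC : C = η ^ 2 * m * L / 2 * (1 + δ) ^ 2 := by
    simp only [C]
    linear_combination (L / 2 * η ^ 2 * (1 + δ) ^ 2) * Real.sq_sqrt (Nat.cast_nonneg (α := ℝ) m)
  rw [← mul_sum, sum_add_distrib, ← mul_sum, ← mul_sum, sum_const, Nat.card_Icc,
    Nat.add_sub_cancel, nsmul_eq_mul, hC] at hsum
  linear_combination hsum

/-- **Summed descent inequality with Newton–Schulz error.**
Telescoping the one-step descent lemma of the Muon update with inexact orthogonalization
`O^(t) = U^(t)V^(t)ᵀ + E^(t)`, `‖E^(t)‖_F ≤ δ√m`, constant step size `η`, over `t = 1,…,T`. -/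
theorem summed_descent_newton_schulz_error
    {m n : ℕ} (hmn : m ≤ n)
    (f : Matrix (Fin m) (Fin n) ℝ → ℝ)
    (gradf : Matrix (Fin m) (Fin n) ℝ → Matrix (Fin m) (Fin n) ℝ)
    (hgrad : ∀ W V : Matrix (Fin m) (Fin n) ℝ,
      HasDerivAt (fun s : ℝ => f (W + s • V)) (frobInner (gradf W) V) 0)
    (L : ℝ) (hL : 0 ≤ L)
    (hlip : ∀ X Y : Matrix (Fin m) (Fin n) ℝ,
      frobNorm (gradf X - gradf Y) ≤ L * frobNorm (X - Y))
    (fstar : ℝ) (hfstar : ∀ X, fstar ≤ f X)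
    (T : ℕ) (hT : 1 ≤ T)
    (W M P E O : ℕ → Matrix (Fin m) (Fin n) ℝ)
    (δ : ℝ) (hδ : 0 ≤ δ)
    (hP : ∀ t ∈ Finset.Icc 1 T, P t * (P t)ᵀ = 1)
    (hO : ∀ t ∈ Finset.Icc 1 T, O t = P t + E t)
    (hE : ∀ t ∈ Finset.Icc 1 T, frobNorm (E t) ≤ δ * Real.sqrt m)
    (η : ℝ) (hη : 0 < η)
    (hupdate : ∀ t ∈ Finset.Icc 1 T, W (t + 1) = W t - η • O t)
    (halign : ∀ t ∈ Finset.Icc 1 T,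
      -(frobInner (gradf (W t)) (P t)) ≤
        -(1 / 4) * frobNorm (gradf (W t)) + (5 / 2) * frobNorm (gradf (W t) - M t)) :
    (η - 4 * η * Real.sqrt m * δ) / 4 * ∑ t ∈ Finset.Icc 1 T, frobNorm (gradf (W t)) ≤
      f (W 1) - fstar
      + (5 * η / 2) * ∑ t ∈ Finset.Icc 1 T, frobNorm (gradf (W t) - M t)
      + η ^ 2 * m * L * T / 2 + T * η ^ 2 * m * L * δ + T * η ^ 2 * L * m * δ ^ 2 / 2 :=
  summed_descent_newton_schulz_error_general f gradf hgrad L hL hlip fstar hfstar T hT W M P E O δ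
    hP hO hE η hη hupdate halign
end
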